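/- Let x = μ_j + z where z ~ N(0, σ²I_d) is a spherical Gaussian in ℝ^d, and let ν_i, ν_j ∈ ℝ^d be estimates with ‖ν_i − μ_i‖ ≤ Cσ/10 and ‖ν_j − μ_j‖ ≤ Cσ/10, where ‖μ_i − μ_j‖ = C_{ij}σ and C_{ij} ≥ C. Then P[‖x − ν_i‖ ≤ ‖x − ν_j‖] ≤ exp(−Ω(C_{ij}²)). -/

import Mathlib

/-!
Being closer to `νi` than to `νj` is a half-space condition `⟪νj - νi, z⟫ ≤ c` on the noise, and
`⟪νj - νi, z⟫` is a centred Gaussian of variance `σ² ‖νj - νi‖²`. Its Chernoff bound, combined with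
`‖νj - νi‖ ≤ ‖μj - νi‖ + ‖μj - νj‖`, bounds the probability by `exp (-(‖μj - νi‖ - ‖μj - νj‖)² / (8σ²))`,
and the triangle inequality gives `‖μj - νi‖ - ‖μj - νj‖ ≥ (4/5) Cij σ`.
-/

open MeasureTheory ProbabilityTheory Real
open scoped NNReal RealInnerProductSpace

/-- `z` is a centered spherical Gaussian vector with per-coordinate variance `σ²`:
every one-dimensional projection `⟪v, z⟫` is Gaussian with variance `σ² ‖v‖²`. -/
def IsSphericalGaussian {Ω : Type*} [MeasurableSpace Ω] (P : Measure Ω) {d : ℕ}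
    (z : Ω → EuclideanSpace ℝ (Fin d)) (σ : ℝ) : Prop :=
  ∀ v : EuclideanSpace ℝ (Fin d),
    Measure.map (fun ω => ⟪v, z ω⟫) P = gaussianReal 0 (Real.toNNReal (σ^2 * ‖v‖^2))

section Gaussian

variable {Ω : Type*} [MeasurableSpace Ω] {P : Measure Ω}

lemma hasSubgaussianMGF_of_map_eq_gaussianReal {X : Ω → ℝ} {v : ℝ≥0}
    (hX : P.map X = gaussianReal 0 v) : HasSubgaussianMGF X v P := by
  have hXm : AEMeasurable X P := aemeasurable_of_map_neZero (by rw [hX]; infer_instance)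
  rw [← HasSubgaussianMGF.id_map_iff hXm, hX]
  exact ⟨integrable_exp_mul_gaussianReal, fun t => by simp [mgf_id_gaussianReal]⟩

lemma measureReal_le_le_exp_of_map_eq_gaussianReal {X : Ω → ℝ} {v : ℝ≥0}
    (hX : P.map X = gaussianReal 0 v) {c : ℝ} (hc : c ≤ 0) :
    P.real {ω | X ω ≤ c} ≤ exp (-c ^ 2 / (2 * v)) := by
  simpa [neg_le_neg_iff] using
    (hasSubgaussianMGF_of_map_eq_gaussianReal hX).neg.measure_ge_le (ε := -c) (by linarith)

end Gaussian

lemma norm_add_sub_le_norm_add_sub_iff {E : Type*} [NormedAddCommGroup E] [InnerProductSpace ℝ E]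
    (a b b' z : E) :
    ‖a + z - b'‖ ≤ ‖a + z - b‖ ↔ ⟪b - b', z⟫ ≤ (‖a - b‖ ^ 2 - ‖a - b'‖ ^ 2) / 2 := by
  rw [← sq_le_sq₀ (norm_nonneg _) (norm_nonneg _), show a + z - b' = (a - b') + z by abel,
    show a + z - b = (a - b) + z by abel, norm_add_sq_real, norm_add_sq_real,
    show b - b' = (a - b') - (a - b) by abel, inner_sub_left (a - b')]
  constructor <;> intro h <;> linarith

namespace IsSphericalGaussian

variable {Ω : Type*} [MeasurableSpace Ω] {P : Measure Ω} {d : ℕ}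
  {z : Ω → EuclideanSpace ℝ (Fin d)} {σ : ℝ}

lemma measureReal_inner_le_le (hz : IsSphericalGaussian P z σ) (w : EuclideanSpace ℝ (Fin d))
    {c : ℝ} (hc : c ≤ 0) :
    P.real {ω | ⟪w, z ω⟫ ≤ c} ≤ exp (-c ^ 2 / (2 * (σ ^ 2 * ‖w‖ ^ 2))) := by
  have h := measureReal_le_le_exp_of_map_eq_gaussianReal (hz w) hc
  rwa [Real.coe_toNNReal _ (by positivity)] at h

lemma measureReal_norm_sub_le_norm_sub_le (hz : IsSphericalGaussian P z σ)
    {a b b' : EuclideanSpace ℝ (Fin d)} (h : ‖a - b‖ ≤ ‖a - b'‖) :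
    P.real {ω | ‖a + z ω - b'‖ ≤ ‖a + z ω - b‖} ≤
      exp (-(‖a - b'‖ - ‖a - b‖) ^ 2 / (8 * σ ^ 2)) := by
  have hr_le : ‖b - b'‖ ≤ ‖a - b‖ + ‖a - b'‖ := by
    simpa [norm_sub_rev a b] using norm_sub_le_norm_sub_add_norm_sub b a b'
  have hr_ge : |‖a - b'‖ - ‖a - b‖| ≤ ‖b - b'‖ := by
    simpa [norm_sub_rev b' b] using abs_norm_sub_norm_le (a - b') (a - b)
  simp_rw [norm_add_sub_le_norm_add_sub_iff]
  have hc : (‖a - b‖ ^ 2 - ‖a - b'‖ ^ 2) / 2 ≤ 0 := by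
    have := pow_le_pow_left₀ (norm_nonneg _) h 2
    linarith
  refine (hz.measureReal_inner_le_le (b - b') hc).trans (exp_le_exp.2 ?_)
  rw [neg_div, neg_div, neg_le_neg_iff]
  rcases (norm_nonneg (b - b')).eq_or_lt' with hr | hr
  · rw [abs_nonpos_iff.1 (hr_ge.trans hr.le), zero_pow two_ne_zero, zero_div]
    positivity
  calc (‖a - b'‖ - ‖a - b‖) ^ 2 / (8 * σ ^ 2)
      = (‖a - b'‖ - ‖a - b‖) ^ 2 * ‖b - b'‖ ^ 2 / (8 * σ ^ 2 * ‖b - b'‖ ^ 2) := by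
        field_simp
    _ ≤ (‖a - b'‖ - ‖a - b‖) ^ 2 * (‖a - b‖ + ‖a - b'‖) ^ 2 / (8 * σ ^ 2 * ‖b - b'‖ ^ 2) := by
        gcongr
    _ = ((‖a - b‖ ^ 2 - ‖a - b'‖ ^ 2) / 2) ^ 2 / (2 * (σ ^ 2 * ‖b - b'‖ ^ 2)) := by ring

end IsSphericalGaussian

theorem stmt_6 :
    ∃ c₀ : ℝ, 0 < c₀ ∧
      ∀ (d : ℕ) (Ω : Type) (_ : MeasurableSpace Ω) (P : Measure Ω)
        (_ : IsProbabilityMeasure P) (z : Ω → EuclideanSpace ℝ (Fin d))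
        (σ C Cij : ℝ) (μi μj νi νj : EuclideanSpace ℝ (Fin d)),
        0 < σ → 0 < C → C ≤ Cij →
        IsSphericalGaussian P z σ →
        ‖μi - μj‖ = Cij * σ →
        ‖νi - μi‖ ≤ C * σ / 10 → ‖νj - μj‖ ≤ C * σ / 10 →
        (P {ω | ‖(μj + z ω) - νi‖ ≤ ‖(μj + z ω) - νj‖}).toReal ≤
          Real.exp (-c₀ * Cij^2) := by
  refine ⟨2 / 25, by norm_num, ?_⟩
  intro d Ω _ P _ z σ C Cij μi μj νi νj hσ hC hCij hz hμ hνi hνj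
  have hCσ : C * σ ≤ Cij * σ := by gcongr
  have hgap : 4 / 5 * (Cij * σ) ≤ ‖μj - νi‖ - ‖μj - νj‖ := by
    have := norm_sub_le_norm_sub_add_norm_sub μi νi μj
    rw [norm_sub_rev νi μj, norm_sub_rev μi νi] at this
    rw [norm_sub_rev νj μj] at hνj
    linarith
  have hgap_nonneg : 0 ≤ 4 / 5 * (Cij * σ) := by have := hC.trans_le hCij; positivity
  refine (hz.measureReal_norm_sub_le_norm_sub_le (by linarith)).trans (exp_le_exp.2 ?_)
  rw [neg_mul, neg_div, neg_le_neg_iff, le_div_iff₀ (by positivity)]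
  linarith [pow_le_pow_left₀ hgap_nonneg hgap 2]
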